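/- arXiv:2406.13976 — 6 statements merged into one kernel-verified Lean document; each statement's English description precedes it below -/
import Mathlib

section
/- Let R be a commutative ring, e ∈ R an idempotent, and M a finitely generated R-module. Then the zeroth Fitting ideal of the submodule eM (as an R-module) equals e·Fitt_R(M) + (1-e)R. -/
open Finset in
/-- The zeroth Fitting ideal of a module: the ideal generated, over all finite generating
families `v` and all square matrices `A` whose rows are relations among the `v j`, by the
determinants `det A`. -/
noncomputable def fittingIdeal (R M : Type*) [CommRing R] [AddCommGroup M] [Module R M] :
    Ideal R :=
  ⨆ (n : ℕ) (v : Fin n → M) (_ : Submodule.span R (Set.range v) = ⊤),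
    Ideal.span {r : R | ∃ A : Matrix (Fin n) (Fin n) R,
      r = A.det ∧ ∀ i, ∑ j, A i j • v j = 0}

lemma det_mem_fittingIdeal {R M : Type*} [CommRing R] [AddCommGroup M] [Module R M]
    {n : ℕ} {v : Fin n → M} (hv : Submodule.span R (Set.range v) = ⊤)
    (A : Matrix (Fin n) (Fin n) R) (hA : ∀ i, ∑ j, A i j • v j = 0) :
    A.det ∈ fittingIdeal R M := by
  have h1 : A.det ∈ Ideal.span {r : R | ∃ B : Matrix (Fin n) (Fin n) R,
      r = B.det ∧ ∀ i, ∑ j, B i j • v j = 0} := Ideal.subset_span ⟨A, rfl, hA⟩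
  have h2 : Ideal.span {r : R | ∃ B : Matrix (Fin n) (Fin n) R,
      r = B.det ∧ ∀ i, ∑ j, B i j • v j = 0} ≤ fittingIdeal R M := by
    unfold fittingIdeal
    exact le_iSup_of_le n (le_iSup_of_le v (le_iSup_of_le hv le_rfl))
  exact h2 h1

lemma mul_det_congr {R : Type*} [CommRing R] {n : ℕ} {e : R} (he : e * e = e)
    {A B : Matrix (Fin n) (Fin n) R} (h : ∀ i j, e * A i j = e * B i j) :
    e * A.det = e * B.det := by
  have key : A.det - B.det ∈ Ideal.span {1 - e} := by
    rw [← Ideal.Quotient.eq, RingHom.map_det, RingHom.map_det]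
    congr 1
    ext i j
    simp only [RingHom.mapMatrix_apply, Matrix.map_apply]
    rw [Ideal.Quotient.eq]
    refine Ideal.mem_span_singleton.mpr ⟨A i j - B i j, ?_⟩
    linear_combination h i j
  obtain ⟨c, hc⟩ := Ideal.mem_span_singleton.mp key
  linear_combination hc * e - c * he

/-- For an idempotent `e` of a commutative ring `R` and a finitely generated `R`-module `M`,
the zeroth Fitting ideal of `eM` equals `e·Fitt_R(M) + (1-e)·R`. -/
theorem fittingIdeal_idempotent_smul {R M : Type*} [CommRing R] [AddCommGroup M] [Module R M]
    [Module.Finite R M] (e : R) (he : IsIdempotentElem e) :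
    fittingIdeal R (LinearMap.range (LinearMap.lsmul R M e)) =
      Ideal.span {e} * fittingIdeal R M + Ideal.span {1 - e} := by
  set P : Submodule R M := LinearMap.range (LinearMap.lsmul R M e) with hP
  have hee : e * e = e := he
  obtain ⟨k, v, hv⟩ := Module.Finite.exists_fin (R := R) (M := M)
  set f : M →ₗ[R] P := (LinearMap.lsmul R M e).rangeRestrict with hf
  have hfs : Function.Surjective f := LinearMap.surjective_rangeRestrict _
  have hfc : ∀ x : M, (f x : M) = e • x := fun x => rfl
  -- (1-e) is in the Fitting ideal of P
  have h1e : (1 - e) ∈ fittingIdeal R P := by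
    have hws : Submodule.span R (Set.range (f ∘ Fin.cons 0 v)) = ⊤ := by
      rw [Set.range_comp, Submodule.span_image, Fin.range_cons, Submodule.span_insert_zero,
        hv, Submodule.map_top, LinearMap.range_eq_top.mpr hfs]
    have hrel : ∀ i, ∑ j, ((1 - e) • (1 : Matrix (Fin (k+1)) (Fin (k+1)) R)) i j •
        (f ∘ Fin.cons 0 v) j = 0 := by
      intro i
      have step : ∑ j, ((1 - e) • (1 : Matrix (Fin (k+1)) (Fin (k+1)) R)) i j •
          (f ∘ Fin.cons 0 v) j = (1 - e) • (f ∘ Fin.cons 0 v) i := by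
        simp [Matrix.smul_apply, Matrix.one_apply, ite_smul, mul_ite]
      rw [step]
      apply Subtype.ext
      simp only [Function.comp_apply, Submodule.coe_smul, hfc, smul_smul, Submodule.coe_zero]
      have h0 : (1 - e) * e = 0 := by linear_combination -hee
      rw [h0, zero_smul]
    have hd : ((1 - e) • (1 : Matrix (Fin (k+1)) (Fin (k+1)) R)).det = 1 - e := by
      rw [Matrix.det_smul, Matrix.det_one, mul_one, Fintype.card_fin]
      exact he.one_sub.pow_succ_eq k
    exact hd ▸ det_mem_fittingIdeal hws _ hrel
  -- e * Fitt(M) ⊆ Fitt(P)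
  have hsub2 : Ideal.span {e} * fittingIdeal R M ≤ fittingIdeal R P := by
    rw [Ideal.mul_le]
    intro r hr s hs
    obtain ⟨a, ha⟩ := Ideal.mem_span_singleton'.mp hr
    have key : e * s ∈ fittingIdeal R P := by
      revert s
      suffices h : fittingIdeal R M ≤
          Submodule.comap (LinearMap.lsmul R R e) (fittingIdeal R P) by
        intro s hs
        have := h hs
        simpa using this
      unfold fittingIdeal
      refine iSup_le fun n => iSup_le fun v' => iSup_le fun hv' => ?_
      rw [Ideal.span_le]
      rintro r ⟨A, rfl, hA⟩
      simp only [SetLike.mem_coe, Submodule.mem_comap, LinearMap.lsmul_apply, smul_eq_mul]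
      -- goal: e * A.det ∈ fittingIdeal R P
      set B : Matrix (Fin n) (Fin n) R := e • A + (1 - e) • 1 with hB
      have hws : Submodule.span R (Set.range (f ∘ v')) = ⊤ := by
        rw [Set.range_comp, Submodule.span_image, hv', Submodule.map_top,
          LinearMap.range_eq_top.mpr hfs]
      have hBe : ∀ i j, B i j * e = e * A i j := by
        intro i j
        by_cases hij : i = j
        · subst hij
          simp only [hB, Matrix.add_apply, Matrix.smul_apply, Matrix.one_apply_eq, smul_eq_mul]
          linear_combination (A i i - 1) * hee
        · simp only [hB, Matrix.add_apply, Matrix.smul_apply, Matrix.one_apply_ne hij,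
            smul_eq_mul]
          linear_combination (A i j) * hee
      have hrel : ∀ i, ∑ j, B i j • (f ∘ v') j = 0 := by
        intro i
        rw [← ZeroMemClass.coe_eq_zero]
        have step : ((∑ j, B i j • (f ∘ v') j : P) : M) = ∑ j, B i j • (e • v' j) := by
          simp [hfc]
        rw [step]
        have step2 : ∀ j, B i j • (e • v' j) = e • (A i j • v' j) := by
          intro j
          rw [smul_smul, hBe i j, mul_smul]
        rw [Finset.sum_congr rfl fun j _ => step2 j, ← Finset.smul_sum, hA i, smul_zero]
      have h1 : e * B.det = e * A.det := by
        refine mul_det_congr hee fun i j => ?_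
        by_cases hij : i = j
        · subst hij
          simp only [hB, Matrix.add_apply, Matrix.smul_apply, Matrix.one_apply_eq, smul_eq_mul]
          linear_combination (A i i - 1) * hee
        · simp only [hB, Matrix.add_apply, Matrix.smul_apply, Matrix.one_apply_ne hij,
            smul_eq_mul]
          linear_combination (A i j) * hee
      have h2 : (1 - e) * B.det = (1 - e) * (1 : Matrix (Fin n) (Fin n) R).det := by
        refine mul_det_congr (by linear_combination hee) fun i j => ?_
        by_cases hij : i = j
        · subst hij
          simp only [hB, Matrix.add_apply, Matrix.smul_apply, Matrix.one_apply_eq, smul_eq_mul]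
          linear_combination (1 - A i i) * hee
        · simp only [hB, Matrix.add_apply, Matrix.smul_apply, Matrix.one_apply_ne hij,
            smul_eq_mul]
          linear_combination (- A i j) * hee
      have h2' : (1 - e) * B.det = 1 - e := by rw [h2, Matrix.det_one, mul_one]
      have hdB : e * A.det = B.det - (1 - e) := by linear_combination -h1 - h2'
      rw [hdB]
      exact sub_mem (det_mem_fittingIdeal hws B hrel) h1e
    rw [← ha, mul_assoc]
    exact Ideal.mul_mem_left _ a key
  -- Fitt(P) ⊆ e * Fitt(M) + (1-e)
  have hsub : fittingIdeal R P ≤ Ideal.span {e} * fittingIdeal R M + Ideal.span {1 - e} := by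
    unfold fittingIdeal
    refine iSup_le fun n => iSup_le fun w => iSup_le fun hw => ?_
    rw [Ideal.span_le]
    rintro r ⟨B, rfl, hB⟩
    set v' : Fin (k+1) → M := Fin.cons 0 (fun i => (1 - e) • v i) with hv'
    set u : Fin (n + (k+1)) → M := Fin.append (fun j => ((w j : M))) v' with hu
    have hus : Submodule.span R (Set.range u) = ⊤ := by
      rw [eq_top_iff]
      rintro m -
      have hm : m = e • m + (1 - e) • m := by
        rw [← add_smul]
        have : e + (1 - e) = 1 := by ring
        rw [this, one_smul]
      rw [hm]
      refine add_mem ?_ ?_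
      · have h1 : e • m ∈ Submodule.span R (Set.range fun j => ((w j : M))) := by
          have heq : Set.range (fun j => ((w j : M))) = P.subtype '' Set.range w := by
            rw [← Set.range_comp]; rfl
          rw [heq, Submodule.span_image, hw, Submodule.map_subtype_top]
          exact ⟨m, rfl⟩
        refine Submodule.span_mono ?_ h1
        rintro x ⟨j, rfl⟩
        exact ⟨Fin.castAdd _ j, Fin.append_left _ _ j⟩
      · have h2 : (1 - e) • m ∈ Submodule.span R (Set.range fun i => (1 - e) • v i) := by
          have heq : Set.range (fun i => (1 - e) • v i)
              = (LinearMap.lsmul R M (1 - e)) '' Set.range v := by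
            rw [← Set.range_comp]; rfl
          rw [heq, Submodule.span_image, hv, Submodule.map_top]
          exact ⟨m, rfl⟩
        refine Submodule.span_mono ?_ h2
        rintro x ⟨j, rfl⟩
        refine ⟨Fin.natAdd n j.succ, ?_⟩
        rw [hu, Fin.append_right, hv', Fin.cons_succ]
    set A : Matrix (Fin (n + (k+1))) (Fin (n + (k+1))) R :=
      Matrix.reindex finSumFinEquiv finSumFinEquiv
        (Matrix.fromBlocks B 0 0 (e • 1)) with hA
    have hrel : ∀ i, ∑ j, A i j • u j = 0 := by
      intro i
      obtain ⟨i₀, rfl⟩ := finSumFinEquiv.surjective i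
      rw [← Equiv.sum_comp finSumFinEquiv (fun j => A (finSumFinEquiv i₀) j • u j)]
      have hAe : ∀ (p q : Fin n ⊕ Fin (k+1)), A (finSumFinEquiv p) (finSumFinEquiv q)
          = Matrix.fromBlocks B 0 0 (e • 1) p q := by
        intro p q
        simp [hA, Matrix.reindex_apply]
      have hue : ∀ q : Fin n ⊕ Fin (k+1),
          u (finSumFinEquiv q) = Sum.elim (fun j => ((w j : M))) v' q := by
        rintro (q | q)
        · rw [finSumFinEquiv_apply_left]; exact Fin.append_left _ _ q
        · rw [finSumFinEquiv_apply_right]; exact Fin.append_right _ _ q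
      calc ∑ q : Fin n ⊕ Fin (k+1),
            A (finSumFinEquiv i₀) (finSumFinEquiv q) • u (finSumFinEquiv q)
          = ∑ q : Fin n ⊕ Fin (k+1), Matrix.fromBlocks B 0 0 (e • 1) i₀ q •
              Sum.elim (fun j => ((w j : M))) v' q :=
            Finset.sum_congr rfl fun q _ => by rw [hAe, hue]
        _ = 0 := by
          rw [Fintype.sum_sum_type]
          rcases i₀ with i | i
          · simp only [Matrix.fromBlocks_apply₁₁, Matrix.fromBlocks_apply₁₂, Sum.elim_inl,
              Sum.elim_inr, Matrix.zero_apply, zero_smul, Finset.sum_const_zero, add_zero]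
            have step : ∑ j, B i j • ((w j : M)) = ((∑ j, B i j • w j : P) : M) := by
              simp
            rw [step, hB i, Submodule.coe_zero]
          · simp only [Matrix.fromBlocks_apply₂₁, Matrix.fromBlocks_apply₂₂, Sum.elim_inl,
              Sum.elim_inr, Matrix.zero_apply, zero_smul, Finset.sum_const_zero, zero_add]
            have step : ∑ j, (e • (1 : Matrix (Fin (k+1)) (Fin (k+1)) R)) i j • v' j
                = e • v' i := by
              simp [Matrix.smul_apply, Matrix.one_apply, ite_smul, mul_ite]
            rw [step]
            refine Fin.cases ?_ ?_ i
            · rw [hv', Fin.cons_zero, smul_zero]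
            · intro i'
              rw [hv', Fin.cons_succ, smul_smul]
              have h0 : e * (1 - e) = 0 := by linear_combination -hee
              rw [h0, zero_smul]
    have hdet : A.det = B.det * e := by
      rw [hA, Matrix.det_reindex_self, Matrix.det_fromBlocks_zero₂₁, Matrix.det_smul,
        Matrix.det_one, mul_one, Fintype.card_fin, he.pow_succ_eq]
    have hmem : B.det * e ∈ fittingIdeal R M := hdet ▸ det_mem_fittingIdeal hus A hrel
    have h1 : e * (B.det * e) ∈ Ideal.span {e} * fittingIdeal R M :=
      Ideal.mul_mem_mul (Ideal.subset_span (Set.mem_singleton e)) hmem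
    have h2 : B.det * (1 - e) ∈ Ideal.span {1 - e} :=
      Ideal.mem_span_singleton'.mpr ⟨B.det, rfl⟩
    have hid : B.det = e * (B.det * e) + B.det * (1 - e) := by
      linear_combination (-B.det) * hee
    simp only [SetLike.mem_coe]
    rw [hid, Submodule.add_eq_sup]
    exact add_mem (Submodule.mem_sup_left h1) (Submodule.mem_sup_right h2)
  refine le_antisymm hsub ?_
  rw [Submodule.add_eq_sup]
  exact sup_le hsub2 ((Ideal.span_singleton_le_iff_mem _).mpr h1e)
end

section
/- Let R be a commutative ring and let 0 → A → B → C → 0 be a short exact sequence of finitely presented R-modules such that C admits a presentation Rⁿ → Rⁿ → C → 0 (a quadratic presentation). Then Fitt_R(B) = Fitt_R(A) · Fitt_R(C). -/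
/-!
Choose generators `a` of `A` and lifts `w` to `B` of the generators `g ∘ w` of `C` given by the
quadratic presentation, whose module of relations is spanned by the rows of a square matrix `H`.
Then `(f ∘ a, w)` generates `B`, and the Fitting ideal may be computed from any generating family.

Relation matrices of `a` and of `g ∘ w` glue to a block-triangular relation matrix of
`(f ∘ a, w)`, so `Fitt A · Fitt C ≤ Fitt B`. Conversely, the `w`-columns of a relation matrix `M`
of `(f ∘ a, w)` are `T H` for some `T`; subtracting `T` times lifts of the rows of `H` to relations
of `B` factors `M = P · (1 0; X H)`, where the `a`-columns of `P` are relations of `a`. A Laplace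
expansion along these columns puts `det P` in `Fitt A`, hence `det M ∈ Fitt A · (det H)`.
-/

open Finset Matrix
open LinearMap (ker)
open Fintype (linearCombination)

section

variable {R : Type*} [CommRing R]

namespace Matrix

variable {n : Type*} [Fintype n] [DecidableEq n]

theorem det_eq_zero_of_card_lt {M : Matrix n n R} (t J : Finset n) (hcard : #J < #t)
    (hM : ∀ i ∈ t, ∀ j ∉ J, M i j = 0) : M.det = 0 := by
  rw [det_apply]
  refine sum_eq_zero fun σ _ => ?_
  obtain ⟨j, hjt, hjJ⟩ : ∃ j ∈ t.image σ.symm, j ∉ J := by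
    by_contra! h
    have := card_le_card h
    rw [card_image_of_injective _ σ.symm.injective] at this
    omega
  obtain ⟨i, hi, rfl⟩ := mem_image.mp hjt
  rw [prod_eq_zero (mem_univ (σ.symm i)) (by simpa using hM i hi _ hjJ), smul_zero]

theorem vecMul_mem_of_forall_mem {ι κ : Type*} [Fintype κ] {L : Submodule R (ι → R)}
    (t : κ → R) {Q : Matrix κ ι R} (hQ : ∀ k, Q k ∈ L) : t ᵥ* Q ∈ L := by
  rw [vecMul_eq_sum]
  exact Submodule.sum_mem _ fun k _ => Submodule.smul_mem _ _ (hQ k)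

variable {ι κ : Type*} [Fintype ι] [DecidableEq ι] [Fintype κ] [DecidableEq κ]

theorem exists_perm_mem_iff_isLeft (s : Finset (ι ⊕ κ)) (hs : #s = Fintype.card ι) :
    ∃ σ : Equiv.Perm (ι ⊕ κ), ∀ x, σ x ∈ s ↔ x.isLeft := by
  have hι : Fintype.card ι = Fintype.card s := by simp [hs]
  have hκ : Fintype.card κ = Fintype.card {x // x ∉ s} := by
    rw [Fintype.card_subtype_compl, Fintype.card_coe, hs, Fintype.card_sum]; omega
  refine ⟨(Equiv.sumCongr (Fintype.equivOfCardEq hι) (Fintype.equivOfCardEq hκ)).trans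
    (Equiv.sumCompl (· ∈ s)), ?_⟩
  rintro (i | k)
  · simp
  · simpa using (Fintype.equivOfCardEq hκ k).2

def splitRows (P : Matrix (ι ⊕ κ) (ι ⊕ κ) R) (s : Finset (ι ⊕ κ)) : Matrix (ι ⊕ κ) (ι ⊕ κ) R :=
  of fun i j => if (i ∈ s ↔ j.isLeft) then P i j else 0

theorem det_eq_sum_det_splitRows (P : Matrix (ι ⊕ κ) (ι ⊕ κ) R) :
    P.det = ∑ s, (P.splitRows s).det := by
  let P₁ : ι ⊕ κ → ι ⊕ κ → R := fun i j => if j.isLeft then P i j else 0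
  let P₂ : ι ⊕ κ → ι ⊕ κ → R := fun i j => if j.isLeft then 0 else P i j
  have hP : P = of (P₁ + P₂) := by ext i (j | j) <;> simp [P₁, P₂]
  have hs : ∀ s, P.splitRows s = of (s.piecewise P₁ P₂) := by
    intro s; ext i (j | j) <;> by_cases hi : i ∈ s <;> simp [splitRows, P₁, P₂, hi]
  conv_lhs => rw [hP]
  simp only [hs]
  exact detRowAlternating.toMultilinearMap.map_add_univ P₁ P₂

theorem det_splitRows_mem_span (P : Matrix (ι ⊕ κ) (ι ⊕ κ) R) (s : Finset (ι ⊕ κ)) :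
    (P.splitRows s).det ∈
      Ideal.span (Set.range fun e : ι → ι ⊕ κ => (P.submatrix e Sum.inl).det) := by
  -- Unless `#s = card ι`, too many rows are supported on too few columns; if `#s = card ι`, a
  -- permutation of the rows makes `P.splitRows s` block diagonal.
  rcases lt_trichotomy #s (Fintype.card ι) with hlt | heq | hgt
  · rw [det_eq_zero_of_card_lt sᶜ (univ.map .inr) (by simp [card_compl]; omega)]
    · exact zero_mem _
    rintro i hi (j | k) hj
    · simp_all [splitRows]
    · simp at hj
  · obtain ⟨σ, hσ⟩ := exists_perm_mem_iff_isLeft s heq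
    have hblock : (P.splitRows s).submatrix σ id =
        fromBlocks (P.submatrix (σ ∘ .inl) .inl) 0 0 (P.submatrix (σ ∘ .inr) .inr) := by
      ext (i | k) (j | l) <;> simp [splitRows, hσ]
    have hsign : IsUnit ((Equiv.Perm.sign σ : ℤ) : R) :=
      (Equiv.Perm.sign σ).isUnit.map (Int.castRingHom R)
    rw [← Ideal.unit_mul_mem_iff_mem _ hsign, ← det_permute, hblock, det_fromBlocks_zero₂₁]
    exact Ideal.mul_mem_right _ _ (Ideal.subset_span ⟨σ ∘ .inl, rfl⟩)
  · rw [det_eq_zero_of_card_lt s (univ.map .inl) (by simp; omega)]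
    · exact zero_mem _
    rintro i hi (j | k) hj
    · simp at hj
    · simp_all [splitRows]

theorem det_mem_span_det_submatrix_inl (P : Matrix (ι ⊕ κ) (ι ⊕ κ) R) :
    P.det ∈ Ideal.span (Set.range fun e : ι → ι ⊕ κ => (P.submatrix e Sum.inl).det) := by
  rw [det_eq_sum_det_splitRows]
  exact Ideal.sum_mem _ fun s _ => det_splitRows_mem_span P s

end Matrix

section LinearCombination

variable {ι κ M N : Type*} [Fintype ι] [Fintype κ] [AddCommGroup M] [Module R M]
  [AddCommGroup N] [Module R N]

theorem Fintype.linearCombination_comp_apply (F : M →ₗ[R] N) (v : ι → M) (x : ι → R) :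
    linearCombination R (F ∘ v) x = F (linearCombination R v x) := by
  simp [Fintype.linearCombination_apply, map_sum]

theorem Fintype.linearCombination_sumElim_apply (v : ι → M) (w : κ → M) (x : ι ⊕ κ → R) :
    linearCombination R (Sum.elim v w) x =
      linearCombination R v (x ∘ .inl) + linearCombination R w (x ∘ .inr) := by
  simp [Fintype.linearCombination_apply, Fintype.sum_sum_type]

theorem Fintype.linearCombination_sumElim_sumElim (v : ι → M) (w : κ → M) (x : ι → R)
    (y : κ → R) :
    linearCombination R (Sum.elim v w) (Sum.elim x y) =
      linearCombination R v x + linearCombination R w y := by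
  rw [Fintype.linearCombination_sumElim_apply, Sum.elim_comp_inl, Sum.elim_comp_inr]

theorem Fintype.linearCombination_comp_equiv_apply (e : κ ≃ ι) (v : ι → M) (x : κ → R) :
    linearCombination R (v ∘ e) x = linearCombination R v (x ∘ e.symm) := by
  simp only [Fintype.linearCombination_apply]
  exact Fintype.sum_equiv e _ _ fun k => by simp

theorem Fintype.linearCombination_single_one [DecidableEq ι] (F : (ι → R) →ₗ[R] N) :
    linearCombination R (fun i => F (Pi.single i 1)) = F := by
  ext i
  simp

end LinearCombination

section DetIdeal

variable {ι κ : Type*} [Fintype ι] [DecidableEq ι] [Fintype κ] [DecidableEq κ]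

def detIdeal (L : Submodule R (ι → R)) : Ideal R :=
  Ideal.span {r | ∃ W : Matrix ι ι R, r = W.det ∧ ∀ i, W i ∈ L}

theorem det_mem_detIdeal {L : Submodule R (ι → R)} {W : Matrix ι ι R} (hW : ∀ i, W i ∈ L) :
    W.det ∈ detIdeal L :=
  Ideal.subset_span ⟨W, rfl, hW⟩

theorem detIdeal_top : detIdeal (⊤ : Submodule R (ι → R)) = ⊤ :=
  (Ideal.eq_top_iff_one _).mpr <| by
    simpa using det_mem_detIdeal (L := ⊤) (W := (1 : Matrix ι ι R)) fun _ => trivial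

theorem det_mem_detIdeal_of_forall_inl {L : Submodule R (ι → R)} {P : Matrix (ι ⊕ κ) (ι ⊕ κ) R}
    (hP : ∀ i, (fun j => P i (.inl j)) ∈ L) : P.det ∈ detIdeal L := by
  refine Ideal.span_le.mpr ?_ P.det_mem_span_det_submatrix_inl
  rintro _ ⟨e, rfl⟩
  exact det_mem_detIdeal fun j => hP (e j)

variable {M : Type*} [AddCommGroup M] [Module R M]

theorem detIdeal_ker_comp_equiv_le (e : κ ≃ ι) (v : ι → M) :
    detIdeal (ker (linearCombination R (v ∘ e))) ≤
      detIdeal (ker (linearCombination R v)) := by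
  refine Ideal.span_le.mpr ?_
  rintro _ ⟨W, rfl, hW⟩
  rw [← det_submatrix_equiv_self e.symm W]
  refine det_mem_detIdeal fun i => ?_
  have := hW (e.symm i)
  rw [LinearMap.mem_ker, Fintype.linearCombination_comp_equiv_apply] at this
  exact this

theorem detIdeal_ker_comp_equiv (e : κ ≃ ι) (v : ι → M) :
    detIdeal (ker (linearCombination R (v ∘ e))) =
      detIdeal (ker (linearCombination R v)) := by
  refine (detIdeal_ker_comp_equiv_le e v).antisymm ?_
  simpa [Function.comp_assoc] using detIdeal_ker_comp_equiv_le e.symm (v ∘ e)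

end DetIdeal

section ShortExact

variable {A B C : Type*} [AddCommGroup A] [Module R A] [AddCommGroup B] [Module R B]
  [AddCommGroup C] [Module R C] {f : A →ₗ[R] B} {g : B →ₗ[R] C}
  {ι κ : Type*} [Fintype ι] [Fintype κ] {a : ι → A}

theorem exists_sumElim_mem_ker_linearCombination (hfg : Function.Exact f g)
    (ha : Submodule.span R (Set.range a) = ⊤) (w : κ → B) {y : κ → R}
    (hy : y ∈ ker (linearCombination R (g ∘ w))) :
    ∃ x : ι → R, Sum.elim x y ∈ ker (linearCombination R (Sum.elim (f ∘ a) w)) := by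
  rw [LinearMap.mem_ker, Fintype.linearCombination_comp_apply] at hy
  obtain ⟨z, hz⟩ := (hfg _).mp hy
  obtain ⟨x, rfl⟩ := (span_range_eq_top_iff_surjective_fintypeLinearCombination R a).mp ha z
  refine ⟨-x, ?_⟩
  rw [LinearMap.mem_ker, Fintype.linearCombination_sumElim_sumElim,
    Fintype.linearCombination_comp_apply, map_neg, map_neg, hz, neg_add_cancel]

theorem span_range_sumElim_eq_top (hfg : Function.Exact f g)
    (ha : Submodule.span R (Set.range a) = ⊤) (w : κ → B)
    (hw : Submodule.span R (Set.range (g ∘ w)) = ⊤) :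
    Submodule.span R (Set.range (Sum.elim (f ∘ a) w)) = ⊤ := by
  simp only [span_range_eq_top_iff_surjective_fintypeLinearCombination] at *
  intro m
  obtain ⟨y, hy⟩ := hw (g m)
  have hker : g (m - linearCombination R w y) = 0 := by
    rw [map_sub, ← Fintype.linearCombination_comp_apply, hy, sub_self]
  obtain ⟨z, hz⟩ := (hfg _).mp hker
  obtain ⟨x, rfl⟩ := ha z
  refine ⟨Sum.elim x y, ?_⟩
  rw [Fintype.linearCombination_sumElim_sumElim, Fintype.linearCombination_comp_apply, hz,
    sub_add_cancel]

variable [DecidableEq ι] [DecidableEq κ]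

theorem detIdeal_mul_detIdeal_le (hfg : Function.Exact f g)
    (ha : Submodule.span R (Set.range a) = ⊤) (w : κ → B) :
    detIdeal (ker (linearCombination R a)) *
        detIdeal (ker (linearCombination R (g ∘ w))) ≤
      detIdeal (ker (linearCombination R (Sum.elim (f ∘ a) w))) := by
  rw [detIdeal, detIdeal, Ideal.span_mul_span', Ideal.span_le]
  rintro _ ⟨_, ⟨Wa, rfl, hWa⟩, _, ⟨Wc, rfl, hWc⟩, rfl⟩
  choose Y hY using fun k => exists_sumElim_mem_ker_linearCombination hfg ha w (hWc k)
  change Wa.det * Wc.det ∈ _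
  rw [← det_fromBlocks_zero₁₂ Wa (of Y) Wc]
  refine det_mem_detIdeal ?_
  rintro (j | k)
  · change Sum.elim (Wa j) 0 ∈ _
    rw [LinearMap.mem_ker, Fintype.linearCombination_sumElim_sumElim,
      Fintype.linearCombination_comp_apply, LinearMap.mem_ker.mp (hWa j), map_zero, map_zero,
      add_zero]
  · exact hY k

theorem detIdeal_ker_sumElim_le (hf : Function.Injective f) (hfg : Function.Exact f g)
    (ha : Submodule.span R (Set.range a) = ⊤) (w : κ → B) {H : Matrix κ κ R}
    (hH : Submodule.span R (Set.range H) = ker (linearCombination R (g ∘ w))) :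
    detIdeal (ker (linearCombination R (Sum.elim (f ∘ a) w))) ≤
      detIdeal (ker (linearCombination R a)) * Ideal.span {H.det} := by
  choose X hX using fun k => exists_sumElim_mem_ker_linearCombination hfg ha w
    (hH ▸ Submodule.subset_span ⟨k, rfl⟩ : H k ∈ _)
  refine Ideal.span_le.mpr ?_
  rintro _ ⟨M, rfl, hM⟩
  obtain ⟨T, hT⟩ : ∃ T : Matrix (ι ⊕ κ) κ R, T * H = M.toCols₂ := by
    have hMC : ∀ i, M.toCols₂ i ∈ Submodule.span R (Set.range H) := fun i => by
      have := congrArg g (LinearMap.mem_ker.mp (hM i))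
      rw [Fintype.linearCombination_sumElim_apply, Fintype.linearCombination_comp_apply, map_add,
        hfg.apply_apply_eq_zero, zero_add, map_zero] at this
      rw [hH, LinearMap.mem_ker, Fintype.linearCombination_comp_apply]
      exact this
    choose T hT using fun i => (Submodule.mem_span_range_iff_exists_fun R).mp (hMC i)
    exact ⟨of T, by funext i; rw [mul_apply_eq_vecMul, vecMul_eq_sum]; exact hT i⟩
  set U := M.toCols₁ - T * of X
  have hMPQ : M = fromCols U T * fromBlocks 1 0 (of X) H := by
    rw [fromCols_mul_fromBlocks, hT]
    simp [U, fromCols_toCols]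
  have hU : ∀ i, U i ∈ ker (linearCombination R a) := by
    intro i
    have hrow : M i = Sum.elim (U i) 0 + T i ᵥ* fromCols (of X) H := by
      rw [vecMul_fromCols, ← mul_apply_eq_vecMul, ← mul_apply_eq_vecMul, hT]
      ext (j | k) <;> simp [U]
    have hXrows := vecMul_mem_of_forall_mem (Q := fromCols (of X) H) (T i) hX
    have hrel := hM i
    rw [hrow, LinearMap.mem_ker, map_add, LinearMap.mem_ker.mp hXrows, add_zero,
      Fintype.linearCombination_sumElim_sumElim, Fintype.linearCombination_comp_apply, map_zero,
      add_zero] at hrel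
    exact (map_eq_zero_iff f hf).mp hrel
  rw [hMPQ, det_mul, det_fromBlocks_zero₁₂, det_one, one_mul]
  exact Ideal.mul_mem_mul (det_mem_detIdeal_of_forall_inl hU) (Ideal.mem_span_singleton_self _)

end ShortExact

section Fitting

variable {M : Type*} [AddCommGroup M] [Module R M]
  {ι κ : Type*} [Fintype ι] [DecidableEq ι] [Fintype κ] [DecidableEq κ]

/-- The change of generating family is the degenerate short exact sequence `0 → M → M → 0 → 0`. -/
theorem detIdeal_ker_le_detIdeal_ker {v : ι → M} {w : κ → M}
    (hv : Submodule.span R (Set.range v) = ⊤) (hw : Submodule.span R (Set.range w) = ⊤) :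
    detIdeal (ker (linearCombination R w)) ≤
      detIdeal (ker (linearCombination R v)) := by
  have hexact : Function.Exact (LinearMap.id : M →ₗ[R] M) (0 : M →ₗ[R] PUnit) :=
    fun _ => by simp
  have hone : Submodule.span R (Set.range (1 : Matrix κ κ R)) =
      ker (linearCombination R ((0 : M →ₗ[R] PUnit) ∘ w)) := by
    have h1 : (1 : Matrix κ κ R) = ⇑(Pi.basisFun R κ) := by
      ext i j
      simp [one_apply, Pi.single_apply, eq_comm]
    rw [LinearMap.ker_eq_top.mpr (Subsingleton.elim _ _), h1, Module.Basis.span_eq]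
  calc detIdeal (ker (linearCombination R w))
      = detIdeal (ker (linearCombination R w)) *
          detIdeal (ker (linearCombination R ((0 : M →ₗ[R] PUnit) ∘ v))) := by
        rw [LinearMap.ker_eq_top.mpr (Subsingleton.elim
          (linearCombination R ((0 : M →ₗ[R] PUnit) ∘ v)) 0), detIdeal_top, Ideal.mul_top]
    _ ≤ detIdeal (ker (linearCombination R (Sum.elim w v))) :=
        detIdeal_mul_detIdeal_le hexact hw v
    _ = detIdeal (ker (linearCombination R (Sum.elim v w))) := by
        rw [← detIdeal_ker_comp_equiv (Equiv.sumComm κ ι) (Sum.elim v w)]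
        congr! 3
        ext (k | i) <;> rfl
    _ ≤ detIdeal (ker (linearCombination R v)) * Ideal.span {(1 : Matrix κ κ R).det} :=
        detIdeal_ker_sumElim_le Function.injective_id hexact hv w hone
    _ = detIdeal (ker (linearCombination R v)) := by
        rw [det_one, Ideal.span_singleton_one, Ideal.mul_top]

theorem fittingIdeal_eq_detIdeal_ker {v : ι → M} (hv : Submodule.span R (Set.range v) = ⊤) :
    fittingIdeal R M = detIdeal (ker (linearCombination R v)) := by
  refine le_antisymm (iSup₂_le fun n w => iSup_le fun hw => detIdeal_ker_le_detIdeal_ker hv hw) ?_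
  let e := (Fintype.equivFin ι).symm
  rw [← detIdeal_ker_comp_equiv e v]
  have hve : Submodule.span R (Set.range (v ∘ e)) = ⊤ := by rwa [e.surjective.range_comp]
  exact le_iSup₂_of_le (Fintype.card ι) (v ∘ e) (le_iSup_of_le hve le_rfl)

end Fitting

end

theorem fittingIdeal_of_quadratically_presented_quotient_general {R A B C : Type*} [CommRing R]
    [AddCommGroup A] [Module R A] [AddCommGroup B] [Module R B] [AddCommGroup C] [Module R C]
    [Module.FinitePresentation R A]
    (f : A →ₗ[R] B) (g : B →ₗ[R] C)
    (hf : Function.Injective f) (hg : Function.Surjective g) (hfg : Function.Exact f g)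
    (hC : ∃ (n : ℕ) (φ : (Fin n → R) →ₗ[R] (Fin n → R)) (ψ : (Fin n → R) →ₗ[R] C),
      Function.Surjective ψ ∧ Function.Exact φ ψ) :
    fittingIdeal R B = fittingIdeal R A * fittingIdeal R C := by
  obtain ⟨n, φ, ψ, hψ, hφψ⟩ := hC
  obtain ⟨b, a, ha⟩ := Module.Finite.exists_fin (R := R) (M := A)
  choose w hw using fun k => hg (ψ (Pi.single k 1))
  have hgw : linearCombination R (g ∘ w) = ψ := by
    simpa [Function.comp_def, hw] using Fintype.linearCombination_single_one ψ
  have hgen : Submodule.span R (Set.range (g ∘ w)) = ⊤ := by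
    rwa [span_range_eq_top_iff_surjective_fintypeLinearCombination, hgw]
  let H : Matrix (Fin n) (Fin n) R := of fun k => φ (Pi.single k 1)
  have hH : Submodule.span R (Set.range H) = ker (linearCombination R (g ∘ w)) := by
    rw [hgw, hφψ.linearMap_ker_eq]
    conv_rhs => rw [← Fintype.linearCombination_single_one φ]
    exact (Fintype.range_linearCombination R _).symm
  rw [fittingIdeal_eq_detIdeal_ker (span_range_sumElim_eq_top hfg ha w hgen),
    fittingIdeal_eq_detIdeal_ker ha, fittingIdeal_eq_detIdeal_ker hgen]
  refine le_antisymm ((detIdeal_ker_sumElim_le hf hfg ha w hH).trans (Ideal.mul_mono_right ?_))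
    (detIdeal_mul_detIdeal_le hfg ha w)
  rw [Ideal.span_singleton_le_iff_mem]
  exact det_mem_detIdeal fun k => hH ▸ Submodule.subset_span ⟨k, rfl⟩

/-- (Johnston–Nickel) If `0 → A → B → C → 0` is a short exact sequence of finitely presented
modules over a commutative ring `R` and `C` admits a quadratic presentation
`Rⁿ → Rⁿ → C → 0`, then `Fitt_R(B) = Fitt_R(A) · Fitt_R(C)`. -/
theorem fittingIdeal_of_quadratically_presented_quotient {R A B C : Type*} [CommRing R]
    [AddCommGroup A] [Module R A] [AddCommGroup B] [Module R B] [AddCommGroup C] [Module R C]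
    [Module.FinitePresentation R A] [Module.FinitePresentation R B]
    [Module.FinitePresentation R C]
    (f : A →ₗ[R] B) (g : B →ₗ[R] C)
    (hf : Function.Injective f) (hg : Function.Surjective g) (hfg : Function.Exact f g)
    (hC : ∃ (n : ℕ) (φ : (Fin n → R) →ₗ[R] (Fin n → R)) (ψ : (Fin n → R) →ₗ[R] C),
      Function.Surjective ψ ∧ Function.Exact φ ψ) :
    fittingIdeal R B = fittingIdeal R A * fittingIdeal R C :=
  fittingIdeal_of_quadratically_presented_quotient_general f g hf hg hfg hC
end

section
/- Let R be a commutative ring, G a finite cyclic group generated by γ, and M an R[G]-module that is free of rank n as an R-module. If M_γ ∈ Mₙ(R) is the matrix of the action of γ on an R-basis of M, then the zeroth Fitting ideal of M over R[G] is the principal ideal generated by det(γ·Iₙ − M_γ), i.e. the characteristic polynomial det(X·Iₙ − M_γ) evaluated at X = γ in R[G]. -/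
section Presentation

open Matrix

variable {S M : Type*} [CommRing S] [AddCommGroup M] [Module S M]

theorem Matrix.exists_eq_mul_of_row_mem_span {l m n : Type*} [Fintype m] {B : Matrix m n S}
    {X : Matrix l n S} (hX : ∀ i, X i ∈ Submodule.span S (Set.range B.row)) :
    ∃ W : Matrix l m S, X = W * B := by
  simp_rw [← range_vecMulLinear, LinearMap.mem_range] at hX
  choose W hW using hX
  exact ⟨W, funext fun i => (hW i).symm⟩

theorem linearCombination_row_mul {l m n : Type*} [Fintype m] [Fintype n] {v : n → M} {w : m → M}
    {D : Matrix m n S} (hD : ∀ k, Fintype.linearCombination S v (D k) = w k)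
    (X : Matrix l m S) (i : l) :
    Fintype.linearCombination S v ((X * D) i) = Fintype.linearCombination S w (X i) := by
  simp [mul_apply_eq_vecMul, vecMul_eq_sum, hD, Fintype.linearCombination_apply]

theorem det_dvd_det_of_ker_eq_span_row {m n : Type*} [Fintype m] [Fintype n] [DecidableEq m]
    [DecidableEq n] {v : n → M} (hv : Submodule.span S (Set.range v) = ⊤) {B : Matrix n n S}
    (hB : LinearMap.ker (Fintype.linearCombination S v) = Submodule.span S (Set.range B.row))
    {w : m → M} (hw : Submodule.span S (Set.range w) = ⊤) {A : Matrix m m S}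
    (hA : ∀ i, Fintype.linearCombination S w (A i) = 0) : B.det ∣ A.det := by
  obtain ⟨D, hD⟩ : ∃ D : Matrix m n S, ∀ k, Fintype.linearCombination S v (D k) = w k :=
    Classical.skolem.1 fun k =>
      (span_range_eq_top_iff_surjective_fintypeLinearCombination S v).1 hv (w k)
  obtain ⟨C, hC⟩ : ∃ C : Matrix n m S, ∀ j, Fintype.linearCombination S w (C j) = v j :=
    Classical.skolem.1 fun j =>
      (span_range_eq_top_iff_surjective_fintypeLinearCombination S w).1 hw (v j)
  obtain ⟨W₁, hW₁⟩ : ∃ W₁, A * D = W₁ * B := exists_eq_mul_of_row_mem_span fun i => by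
    rw [← hB, LinearMap.mem_ker, linearCombination_row_mul hD, hA]
  obtain ⟨W₂, hW₂⟩ : ∃ W₂, 1 - C * D = W₂ * B := exists_eq_mul_of_row_mem_span fun j => by
    change (1 : Matrix n n S) j - (C * D) j ∈ _
    rw [← hB, LinearMap.mem_ker, map_sub, linearCombination_row_mul hD, hC]
    simp [Fintype.linearCombination_apply, one_apply]
  have hblocks : fromBlocks A 0 (-C) 1 * fromBlocks 1 D 0 1 =
      fromBlocks A W₁ (-C) W₂ * fromBlocks 1 0 0 B := by
    simp [fromBlocks_multiply, ← hW₁, ← hW₂, neg_add_eq_sub]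
  exact Dvd.intro_left _ (by simpa [det_fromBlocks_zero₂₁] using (congrArg det hblocks).symm)

theorem fittingIdeal_eq_span_det {n : ℕ} {v : Fin n → M}
    (hv : Submodule.span S (Set.range v) = ⊤) {B : Matrix (Fin n) (Fin n) S}
    (hB : LinearMap.ker (Fintype.linearCombination S v) = Submodule.span S (Set.range B.row)) :
    fittingIdeal S M = Ideal.span {B.det} := by
  refine le_antisymm (iSup_le fun m => iSup_le fun w => iSup_le fun hw => Ideal.span_le.2 ?_) ?_
  · rintro _ ⟨A, rfl, hA⟩
    exact Ideal.mem_span_singleton.2 (det_dvd_det_of_ker_eq_span_row hv hB hw hA)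
  · refine Ideal.span_le.2 (Set.singleton_subset_iff.2 ?_)
    refine Submodule.mem_iSup_of_mem n <| Submodule.mem_iSup_of_mem v <|
      Submodule.mem_iSup_of_mem hv <| Ideal.subset_span ⟨B, rfl, fun i => ?_⟩
    exact LinearMap.mem_ker.1 (hB ▸ Submodule.subset_span (Set.mem_range_self i))

end Presentation

theorem MonoidAlgebra.adjoin_of_eq_top_of_powers_eq_top {R G : Type*} [CommSemiring R]
    [CommMonoid G] {γ : G} (hγ : Submonoid.powers γ = ⊤) :
    Algebra.adjoin R {MonoidAlgebra.of R G γ} = ⊤ := by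
  have := MonoidAlgebra.mvPolynomial_aeval_of_surjective_of_closure (R := R)
    (hγ ▸ Submonoid.powers_eq_closure γ).symm
  rw [← AlgHom.range_eq_top, ← Algebra.adjoin_range_eq_range_aeval] at this
  simpa [Set.range_comp] using this

open Polynomial in
theorem Matrix.aeval_charpoly_eq_det_scalar_sub {R S n : Type*} [CommRing R] [CommRing S]
    [Algebra R S] [Fintype n] [DecidableEq n] (A : Matrix n n R) (g : S) :
    aeval g A.charpoly = (scalar n g - A.map (algebraMap R S)).det := by
  rw [aeval_def, ← eval_map, ← charpoly_map, eval_charpoly]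

theorem Submodule.smul_mem_of_adjoin_singleton_eq_top {R S M : Type*} [CommSemiring R]
    [Semiring S] [Algebra R S] [AddCommMonoid M] [Module R M] [Module S M] [IsScalarTower R S M]
    {g : S} (hg : Algebra.adjoin R {g} = ⊤) {N : Submodule R M} (hN : ∀ x ∈ N, g • x ∈ N)
    (s : S) {x : M} (hx : x ∈ N) : s • x ∈ N := by
  induction (hg ▸ Algebra.mem_top : s ∈ Algebra.adjoin R {g}) using Algebra.adjoin_induction
    generalizing x with
  | mem s hs => exact (Set.mem_singleton_iff.1 hs) ▸ hN x hx
  | algebraMap r => exact algebraMap_smul S r x ▸ N.smul_mem r hx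
  | add s t _ _ hs ht => exact add_smul s t x ▸ add_mem (hs hx) (ht hx)
  | mul s t _ _ hs ht => exact mul_smul s t x ▸ hs (ht hx)

section Relations

open Matrix

variable {R S M ι : Type*} [CommRing R] [CommRing S] [Algebra R S] [AddCommGroup M] [Module R M]
  [Module S M] [IsScalarTower R S M] [Fintype ι] [DecidableEq ι]
  (b : Module.Basis ι R M) {g : S} {A : Matrix ι ι R}

theorem linearCombination_row_scalar_sub_map (hA : ∀ i, g • b i = ∑ j, A i j • b j) (i : ι) :
    Fintype.linearCombination S b ((scalar ι g - A.map (algebraMap R S)).row i) = 0 := by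
  simp [Fintype.linearCombination_apply, sub_smul, diagonal_apply, ite_smul, hA]

theorem ker_linearCombination_eq_span_row (hA : ∀ i, g • b i = ∑ j, A i j • b j)
    (hg : Algebra.adjoin R {g} = ⊤) :
    LinearMap.ker (Fintype.linearCombination S b) =
      Submodule.span S (Set.range (scalar ι g - A.map (algebraMap R S)).row) := by
  set B := scalar ι g - A.map (algebraMap R S)
  set K := Submodule.span S (Set.range B.row)
  set e : ι → ι → S := fun i => Pi.single i 1
  set N := K.restrictScalars R ⊔ Submodule.span R (Set.range e)
  have hK : K ≤ LinearMap.ker (Fintype.linearCombination S b) :=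
    Submodule.span_le.2 <| Set.range_subset_iff.2 (linearCombination_row_scalar_sub_map b hA)
  have hgN : ∀ x ∈ N, g • x ∈ N := by
    suffices N ≤ N.comap (Algebra.lsmul R R (ι → S) g) from fun x hx => this hx
    refine sup_le (fun k hk => Submodule.mem_sup_left (K.smul_mem g hk))
      (Submodule.span_le.2 (Set.range_subset_iff.2 fun i => ?_))
    have hg_single : g • e i = B.row i + ∑ j, A i j • e j := by
      ext l
      by_cases h : i = l <;> simp [B, e, h, Pi.single_apply, eq_comm, Algebra.smul_def]
    simp only [SetLike.mem_coe, Submodule.mem_comap, Algebra.lsmul_coe, hg_single]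
    exact add_mem (Submodule.mem_sup_left (Submodule.subset_span ⟨i, rfl⟩))
      (sum_mem fun j _ => N.smul_mem _ (Submodule.mem_sup_right (Submodule.subset_span ⟨j, rfl⟩)))
  refine le_antisymm (fun x hx => ?_) hK
  have hxN : x ∈ N := by
    rw [pi_eq_sum_univ' x]
    exact sum_mem fun i _ => Submodule.smul_mem_of_adjoin_singleton_eq_top hg hgN _
      (Submodule.mem_sup_right (Submodule.subset_span ⟨i, rfl⟩))
  obtain ⟨k, hk, _, hy, rfl⟩ := Submodule.mem_sup.1 hxN
  obtain ⟨c, rfl⟩ := (Submodule.mem_span_range_iff_exists_fun R).1 hy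
  have hc : ∑ j, c j • b j = 0 := by
    simpa [LinearMap.map_smul_of_tower, e, LinearMap.mem_ker.1 (hK hk)] using hx
  simpa [Fintype.linearIndependent_iff.1 b.linearIndependent c hc] using hk

end Relations

open Finset in
/-- (Greither–Popescu) Let `G` be a finite cyclic group generated by `γ`, `R` a commutative
ring, and `M` an `R[G]`-module that is free of rank `n` over `R`, with `Mγ` the matrix of the
action of `γ` on an `R`-basis of `M`. Then the zeroth Fitting ideal of `M` over `R[G]` is
generated by the characteristic polynomial of `Mγ` evaluated at `X = γ`. -/
theorem fittingIdeal_eq_charpoly_eval_generator {R G M : Type*} [CommRing R] [CommGroup G]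
    [Finite G] (γ : G) (hγ : Subgroup.zpowers γ = ⊤)
    [AddCommGroup M] [Module (MonoidAlgebra R G) M] [Module R M]
    [IsScalarTower R (MonoidAlgebra R G) M]
    {n : ℕ} (b : Module.Basis (Fin n) R M) (Mγ : Matrix (Fin n) (Fin n) R)
    (hMγ : ∀ i, (MonoidAlgebra.of R G γ) • b i = ∑ j, Mγ i j • b j) :
    fittingIdeal (MonoidAlgebra R G) M =
      Ideal.span {Polynomial.aeval (MonoidAlgebra.of R G γ : MonoidAlgebra R G) Mγ.charpoly} := by
  have hpowers : Submonoid.powers γ = ⊤ :=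
    (Submonoid.eq_top_iff' _).2 fun x => mem_powers_iff_mem_zpowers.2 (hγ ▸ Subgroup.mem_top x)
  have hb : Submodule.span (MonoidAlgebra R G) (Set.range b) = ⊤ := by
    rw [← Submodule.span_span_of_tower R, b.span_eq, Submodule.top_coe, Submodule.span_univ]
  rw [Matrix.aeval_charpoly_eq_det_scalar_sub]
  exact fittingIdeal_eq_span_det hb <| ker_linearCombination_eq_span_row b hMγ <|
    MonoidAlgebra.adjoin_of_eq_top_of_powers_eq_top hpowers
end

section
/- Let A = 𝔽_q[t], let G be a finite abelian group, and let f, g ∈ A[G] be two polynomials in t with coefficients in 𝔽_q[G] that are monic in t of the same degree. If g divides f in the localization A_{(v₀)}[G] for every maximal ideal v₀ of A, then f = g. -/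
/-- Let `A = 𝔽_q[t]`, `G` a finite abelian group, and `f, g ∈ A[G] = 𝔽_q[G][t]` monic in `t`
of the same degree. If `g` divides `f` in the localization `A_{(v₀)}[G]` for every maximal
ideal `v₀` of `A` — i.e. for each such `v₀` there are `s ∈ A \ v₀` and `h ∈ A[G]` with
`s·f = g·h` — then `f = g`.  Here `A[G]` is realized as `Polynomial (MonoidAlgebra 𝔽_q G)`,
and `φ : A → A[G]` is the natural coefficient embedding. -/
theorem monic_eq_of_locally_dvd {F G : Type*} [Field F] [Finite F] [CommGroup G] [Finite G]
    (f g : Polynomial (MonoidAlgebra F G)) (hf : f.Monic) (hg : g.Monic)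
    (hdeg : f.natDegree = g.natDegree)
    (hloc : ∀ v₀ : Ideal (Polynomial F), v₀.IsMaximal →
      ∃ (s : Polynomial F) (h : Polynomial (MonoidAlgebra F G)), s ∉ v₀ ∧
        (Polynomial.mapRingHom (algebraMap F (MonoidAlgebra F G))) s * f = g * h) :
    f = g := by
  set φ := Polynomial.mapRingHom (algebraMap F (MonoidAlgebra F G)) with hφ
  -- Step 1: globalize the local divisibility to `g ∣ f` in `A[G]`.
  have hdvd : g ∣ f := by
    let I : Ideal (Polynomial F) :=
      { carrier := {a | g ∣ φ a * f}
        add_mem' := fun {a b} ha hb => by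
          simpa [map_add, add_mul] using dvd_add ha hb
        zero_mem' := by simp
        smul_mem' := fun c a ha => by
          simpa [smul_eq_mul, map_mul, mul_assoc] using ha.mul_left (φ c) }
    have hI : I = ⊤ := by
      by_contra h
      obtain ⟨M, hM, hIM⟩ := Ideal.exists_le_maximal I h
      obtain ⟨s, k, hs, hsf⟩ := hloc M hM
      exact hs (hIM (show g ∣ φ s * f from ⟨k, hsf⟩))
    have h1 : (1 : Polynomial F) ∈ I := hI ▸ Submodule.mem_top
    have : g ∣ φ 1 * f := h1
    simpa using this
  obtain ⟨k, hk⟩ := hdvd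
  have hk0 : k ≠ 0 := by
    rintro rfl
    rw [mul_zero] at hk
    exact hf.ne_zero hk
  have hlc : g.leadingCoeff * k.leadingCoeff ≠ 0 := by
    simpa [hg.leadingCoeff] using Polynomial.leadingCoeff_ne_zero.mpr hk0
  have hnd : k.natDegree = 0 := by
    have h1 : f.natDegree = g.natDegree + k.natDegree := by
      rw [hk]; exact Polynomial.natDegree_mul' hlc
    omega
  have hlck : k.leadingCoeff = 1 := by
    have h2 : f.leadingCoeff = g.leadingCoeff * k.leadingCoeff := by
      rw [hk]; exact Polynomial.leadingCoeff_mul' hlc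
    rw [hf.leadingCoeff, hg.leadingCoeff, one_mul] at h2
    exact h2.symm
  have hk1 : k = 1 := by
    have := Polynomial.eq_C_of_natDegree_eq_zero hnd
    rw [Polynomial.leadingCoeff, hnd] at hlck
    rw [this, hlck, map_one]
  rw [hk, hk1, mul_one]
end

section
/- Let L be an algebraically closed field containing 𝔽_q, let R = L[[π]] be the power series ring, and let F: R → R be the ring endomorphism raising each coefficient of a power series to the q-th power. Then the map X ↦ F(X)^{-1}·X from GLₙ(R) to GLₙ(R) is surjective, assuming Lang's theorem for GLₙ(L) and solvability of Artin–Schreier equations x^q − x = a over L. -/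
/-!
Let `B = F(Y) A Y⁻¹`, where `Y` is the constant matrix given by Lang's theorem over `L` applied to
the constant term of `A`; then `B ≡ 1 mod π`, and `X = Z Y` solves `F(X)⁻¹ X = A` as soon as
`F(Z) B = Z`. Comparing coefficients of `π ^ m` in `F(Z) B = Z` with `Z₀ = 1` gives
`Z_m - F(Z_m) = ∑_{i < m} F(Z_i) B_{m - i}`, an Artin–Schreier equation in each entry, so the
coefficients of `Z` can be found one after another; `Z` is invertible because `Z₀` is.
-/

open PowerSeries Finset

section LangSeq

variable {S : Type*} [Ring S] (σ : S →+* S) (sol : S → S) (b : ℕ → S)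

/-- The coefficients of the solution `Z` of `σ(Z) * B = Z` with `Z₀ = 1` in `S⟦t⟧`, where `b` lists
the coefficients of `B` and `sol` inverts `z ↦ z - σ z`. -/
noncomputable def langSeq : ℕ → S
  | 0 => 1
  | m + 1 => sol (∑ i : Fin (m + 1), σ (langSeq i) * b (m + 1 - i))

theorem langSeq_zero : langSeq σ sol b 0 = 1 := by
  rw [langSeq]

theorem sum_antidiagonal_langSeq (hsol : ∀ c, sol c - σ (sol c) = c) (hb : b 0 = 1) (m : ℕ) :
    ∑ pr ∈ antidiagonal m, σ (langSeq σ sol b pr.1) * b pr.2 = langSeq σ sol b m := by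
  rcases m with _ | m
  · simp [langSeq_zero, hb]
  · rw [Nat.sum_antidiagonal_eq_sum_range_succ_mk, ← Fin.sum_univ_eq_sum_range, Fin.sum_univ_castSucc]
    simp only [Fin.val_castSucc, Fin.val_last, Nat.sub_self, hb, mul_one]
    rw [langSeq]
    exact (sub_eq_iff_eq_add.mp (hsol _)).symm

end LangSeq

namespace Matrix

theorem exists_sub_map_eq {R : Type*} [AddGroup R] {m n : Type*} {σ : R → R}
    (hσ : ∀ a, ∃ x, x - σ x = a) (c : Matrix m n R) : ∃ z : Matrix m n R, z - z.map σ = c := by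
  choose f hf using hσ
  exact ⟨c.map f, by ext; simp [hf]⟩

variable {R : Type*} [Semiring R] {l n o : Type*}

theorem map_coeff_mul [Fintype n] (P : Matrix l n R⟦X⟧) (Q : Matrix n o R⟦X⟧) (m : ℕ) :
    (P * Q).map (coeff m) =
      ∑ pr ∈ antidiagonal m, P.map (coeff pr.1) * Q.map (coeff pr.2) := by
  ext i j
  simp only [map_apply, mul_apply, coeff_mul, map_sum, sum_apply]
  exact Finset.sum_comm

theorem ext_coeff {P Q : Matrix l o R⟦X⟧}
    (h : ∀ m, P.map (coeff m) = Q.map (coeff m)) : P = Q :=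
  ext fun i j => PowerSeries.ext fun m => congr_fun₂ (h m) i j

theorem isUnit_iff_isUnit_map_constantCoeff {R : Type*} [CommRing R] [Fintype n] [DecidableEq n]
    (P : Matrix n n R⟦X⟧) :
    IsUnit P ↔ IsUnit (P.map constantCoeff) := by
  rw [isUnit_iff_isUnit_det, isUnit_iff_isUnit_det, PowerSeries.isUnit_iff_constantCoeff,
    RingHom.map_det, RingHom.mapMatrix_apply]

end Matrix

theorem exists_eq_inv_map_mul_of_ker {G H : Type*} [Group G] [Group H] (F : G →* G)
    (σ : H →* H) (ε : G →* H) (ι : H →* G) (hει : ∀ h, ε (ι h) = h)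
    (hεFι : ∀ h, ε (F (ι h)) = σ h) (hH : ∀ h, ∃ x, h = (σ x)⁻¹ * x)
    (hker : ∀ g, ε g = 1 → ∃ z, g = (F z)⁻¹ * z) (g : G) : ∃ x, g = (F x)⁻¹ * x := by
  obtain ⟨x₀, hx₀⟩ := hH (ε g)
  obtain ⟨z, hz⟩ := hker (F (ι x₀) * g * (ι x₀)⁻¹) <| by
    rw [map_mul, map_mul, map_inv, hεFι, hει, hx₀]
    group
  refine ⟨z * ι x₀, ?_⟩
  calc g = (F (ι x₀))⁻¹ * (F (ι x₀) * g * (ι x₀)⁻¹) * ι x₀ := by group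
    _ = (F (z * ι x₀))⁻¹ * (z * ι x₀) := by rw [hz, map_mul]; group

section PowerSeries

variable {n : Type*} [Fintype n] [DecidableEq n]

theorem exists_mapMatrix_map_mul_eq_self {R : Type*} [Ring R] (σ : R →+* R)
    (hσ : ∀ a, ∃ x, x - σ x = a) (B : Matrix n n R⟦X⟧) (hB : B.map constantCoeff = 1) :
    ∃ Z : Matrix n n R⟦X⟧, Z.map constantCoeff = 1 ∧ (map σ).mapMatrix Z * B = Z := by
  choose sol hsol using Matrix.exists_sub_map_eq (m := n) (n := n) hσ
  set b : ℕ → Matrix n n R := fun m => B.map (coeff m)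
  set z := langSeq σ.mapMatrix sol b
  set Z : Matrix n n R⟦X⟧ := Matrix.of fun i j => mk fun m => z m i j
  have hZ : ∀ m, Z.map (coeff m) = z m := fun m => by ext; simp [Z]
  have hFZ : ∀ m, ((map σ).mapMatrix Z).map (coeff m) = σ.mapMatrix (z m) := fun m => by
    ext; simp [Z, coeff_map]
  have hb : b 0 = 1 := by simpa [b, coeff_zero_eq_constantCoeff] using hB
  refine ⟨Z, by simpa [coeff_zero_eq_constantCoeff] using (hZ 0).trans (langSeq_zero _ _ _), ?_⟩
  have hrec := sum_antidiagonal_langSeq σ.mapMatrix sol b (fun c => by simpa using hsol c) hb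
  have hcoeff : ∀ m, ((map σ).mapMatrix Z * B).map (coeff m) = Z.map (coeff m) := fun m => by
    simp only [Matrix.map_coeff_mul, hFZ, hZ]
    exact hrec m
  exact Matrix.ext_coeff hcoeff

variable {R : Type*} [CommRing R] (σ : R →+* R)

theorem exists_eq_inv_units_map_mul_of_constantCoeff_eq_one (hσ : ∀ a, ∃ x, x - σ x = a)
    (B : (Matrix n n R⟦X⟧)ˣ)
    (hB : Units.map (RingHom.mapMatrix (m := n) (constantCoeff (R := R))).toMonoidHom B = 1) :
    ∃ Z : (Matrix n n R⟦X⟧)ˣ, B = (Units.map (map σ).mapMatrix.toMonoidHom Z)⁻¹ * Z := by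
  have hB1 : B.val.map constantCoeff = 1 := by simpa using congrArg Units.val hB
  obtain ⟨Z, hZ1, hZ⟩ := exists_mapMatrix_map_mul_eq_self σ hσ B.val hB1
  have hZu : IsUnit Z := (Matrix.isUnit_iff_isUnit_map_constantCoeff Z).mpr (hZ1 ▸ isUnit_one)
  exact ⟨hZu.unit, eq_inv_mul_iff_mul_eq.mpr (Units.ext hZ)⟩

theorem exists_eq_inv_units_map_mul
    (hLang : ∀ A : (Matrix n n R)ˣ, ∃ X : (Matrix n n R)ˣ,
      A = (Units.map σ.mapMatrix.toMonoidHom X)⁻¹ * X)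
    (hσ : ∀ a, ∃ x, x - σ x = a) (A : (Matrix n n R⟦X⟧)ˣ) :
    ∃ X : (Matrix n n R⟦X⟧)ˣ, A = (Units.map (map σ).mapMatrix.toMonoidHom X)⁻¹ * X :=
  exists_eq_inv_map_mul_of_ker _ (Units.map σ.mapMatrix.toMonoidHom)
    (Units.map (RingHom.mapMatrix (m := n) (constantCoeff (R := R))).toMonoidHom)
    (Units.map (RingHom.mapMatrix (m := n) (C (R := R))).toMonoidHom)
    (fun x => Units.ext <| by ext; simp) (fun x => Units.ext <| by ext; simp) hLang
    (exists_eq_inv_units_map_mul_of_constantCoeff_eq_one σ hσ) A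

end PowerSeries

theorem lang_GL_powerSeries_surjective_general {L : Type*} [Field L] (q : ℕ)
    (φ : L →+* L) (hφ : ∀ x : L, φ x = x ^ q) (n : ℕ)
    (hLang : ∀ A : (Matrix (Fin n) (Fin n) L)ˣ, ∃ X : (Matrix (Fin n) (Fin n) L)ˣ,
      A = (Units.map (RingHom.mapMatrix (m := Fin n) φ).toMonoidHom X)⁻¹ * X)
    (hAS : ∀ a : L, ∃ x : L, x ^ q - x = a) :
    ∀ A : (Matrix (Fin n) (Fin n) (PowerSeries L))ˣ,
      ∃ X : (Matrix (Fin n) (Fin n) (PowerSeries L))ˣ,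
        A = (Units.map (RingHom.mapMatrix (m := Fin n) (PowerSeries.map φ)).toMonoidHom X)⁻¹ * X := by
  refine exists_eq_inv_units_map_mul φ hLang fun a => ?_
  obtain ⟨x, hx⟩ := hAS (-a)
  exact ⟨x, by rw [hφ, ← neg_sub, hx, neg_neg]⟩

/-- Lang's theorem for `GLₙ` over the power series ring `L[[π]]`: if `φ` is the `q`-power
Frobenius of an algebraically closed field `L` containing `𝔽_q`, acting coefficientwise on
`L[[π]]`, then — assuming Lang's theorem for `GLₙ(L)` and the solvability of Artin–Schreier
equations over `L` — the map `X ↦ F(X)⁻¹ · X` on `GLₙ(L[[π]])` is surjective. -/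
theorem lang_GL_powerSeries_surjective {L : Type*} [Field L] [IsAlgClosed L]
    (p k q : ℕ) (hp : p.Prime) [CharP L p] (hk : 0 < k) (hq : q = p ^ k)
    (φ : L →+* L) (hφ : ∀ x : L, φ x = x ^ q) (n : ℕ)
    (hLang : ∀ A : (Matrix (Fin n) (Fin n) L)ˣ, ∃ X : (Matrix (Fin n) (Fin n) L)ˣ,
      A = (Units.map (RingHom.mapMatrix (m := Fin n) φ).toMonoidHom X)⁻¹ * X)
    (hAS : ∀ a : L, ∃ x : L, x ^ q - x = a) :
    ∀ A : (Matrix (Fin n) (Fin n) (PowerSeries L))ˣ,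
      ∃ X : (Matrix (Fin n) (Fin n) (PowerSeries L))ˣ,
        A = (Units.map (RingHom.mapMatrix (m := Fin n) (PowerSeries.map φ)).toMonoidHom X)⁻¹ * X :=
  lang_GL_powerSeries_surjective_general q φ hφ n hLang hAS
end

section
/- Let R be a commutative ring, L an R-algebra equipped with an R-algebra endomorphism F with fixed subring R (i.e. L^{F} = R), and let M be a finite free L-module with an F-semilinear endomorphism t: M → M. Suppose the matrix A of t on some L-basis satisfies A = F(X)^{-1}·X for some X ∈ GLₙ(L). Then the natural map M^{t=1} ⊗_R L → M is an isomorphism of L-modules; in particular M has an L-basis contained in the fixed set M^{t=1}. -/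
open scoped TensorProduct

/-!
If `F(X)·A = X`, the rows of `X` express a new basis `e' = X·e` whose vectors are fixed by `t`.
In a basis of fixed vectors `t` acts on coordinates by `F`, so the coordinates of a fixed vector
lie in `L^F = R`; hence `M^{t=1}` is spanned over `R` by `e'`, and `e' i ↦ 1 ⊗ e' i` inverts the
multiplication map `L ⊗_R M^{t=1} → M`. Since `R → L` need not be injective, `e'` need not be
`R`-free, so this inverse is built directly rather than by base change of an `R`-basis.
-/

namespace Module.Basis

variable {ι L M : Type*} [Fintype ι] [DecidableEq ι] [CommRing L] [AddCommGroup M] [Module L M]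

theorem exists_basis_apply_eq_sum_smul (e : Basis ι L M) (X : (Matrix ι ι L)ˣ) :
    ∃ b : Basis ι L M, ∀ i, b i = ∑ j, (X : Matrix ι ι L) i j • e j := by
  have hdet : IsUnit (X : Matrix ι ι L).transpose.det := by
    rw [Matrix.det_transpose]
    exact (Matrix.isUnit_iff_isUnit_det _).mp X.isUnit
  refine ⟨e.map (Matrix.toLinearEquiv e _ hdet), fun i => ?_⟩
  simp [Matrix.toLinearEquiv_apply, Matrix.toLin_self, Matrix.transpose_apply]

end Module.Basis

section Semilinear

variable {R L M : Type*} [CommRing R] [CommRing L] [AddCommGroup M] [Module L M] [Module R M]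
  {F : L →+* L} {t : M →ₗ[R] M}

theorem semilinear_apply_sum_smul {ι : Type*} [Fintype ι]
    (hsemi : ∀ (c : L) (m : M), t (c • m) = F c • t m) {e : ι → M} {A : Matrix ι ι L}
    (hA : ∀ i, t (e i) = ∑ j, A i j • e j) (X : Matrix ι ι L) (i : ι) :
    t (∑ j, X i j • e j) = ∑ k, (X.map F * A) i k • e k := by
  simp only [map_sum, hsemi, hA, Finset.smul_sum, smul_smul, Matrix.mul_apply, Matrix.map_apply,
    Finset.sum_smul]
  exact Finset.sum_comm

namespace Module.Basis

variable {ι : Type*} [Fintype ι]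

theorem repr_semilinear_apply (hsemi : ∀ (c : L) (m : M), t (c • m) = F c • t m)
    (b : Basis ι L M) (hb : ∀ i, t (b i) = b i) (m : M) (i : ι) :
    b.repr (t m) i = F (b.repr m i) := by
  have h : t m = ∑ j, F (b.repr m j) • b j := by
    conv_lhs => rw [← b.sum_repr m]
    simp only [map_sum, hsemi, hb]
  rw [h, b.repr_sum_self]

theorem exists_eq_sum_smul_of_mem_eqLocus [Algebra R L] [IsScalarTower R L M]
    (hfix : ∀ x : L, F x = x → ∃ r : R, algebraMap R L r = x)
    (hsemi : ∀ (c : L) (m : M), t (c • m) = F c • t m)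
    (b : Basis ι L M) (hb : ∀ i, t (b i) = b i) {m : M}
    (hm : m ∈ LinearMap.eqLocus t LinearMap.id) :
    ∃ r : ι → R, ∑ i, r i • b i = m := by
  have hcoord : ∀ i, F (b.repr m i) = b.repr m i := fun i => by
    rw [← b.repr_semilinear_apply hsemi hb, show t m = m from hm]
  choose r hr using fun i => hfix _ (hcoord i)
  refine ⟨r, ?_⟩
  conv_rhs => rw [← b.sum_repr m]
  simp only [← hr, algebraMap_smul]

end Module.Basis

theorem liftBaseChange_eqLocus_bijective_of_basis [Algebra R L] [IsScalarTower R L M]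
    {ι : Type*} [Fintype ι]
    (hfix : ∀ x : L, F x = x → ∃ r : R, algebraMap R L r = x)
    (hsemi : ∀ (c : L) (m : M), t (c • m) = F c • t m)
    (b : Module.Basis ι L M) (hb : ∀ i, t (b i) = b i) :
    Function.Bijective ((LinearMap.eqLocus t LinearMap.id).subtype.liftBaseChange L) := by
  set N := LinearMap.eqLocus t LinearMap.id
  set φ : L ⊗[R] N →ₗ[L] M := N.subtype.liftBaseChange L
  have hbN : ∀ i, b i ∈ N := hb
  let ψ : M →ₗ[L] L ⊗[R] N := b.constr L fun i => 1 ⊗ₜ ⟨b i, hbN i⟩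
  have hψ : ∀ x : N, ψ x = 1 ⊗ₜ x := fun x => by
    obtain ⟨r, hr⟩ := b.exists_eq_sum_smul_of_mem_eqLocus hfix hsemi hb x.2
    have hrN : ∑ i, r i • (⟨b i, hbN i⟩ : N) = x := Subtype.ext (by simpa using hr)
    rw [← hr, ← hrN, map_sum, TensorProduct.tmul_sum]
    refine Finset.sum_congr rfl fun i _ => ?_
    rw [LinearMap.map_smul_of_tower, b.constr_basis, TensorProduct.tmul_smul]
  have hφψ : φ ∘ₗ ψ = LinearMap.id := b.ext fun i => by
    simp only [LinearMap.comp_apply, ψ, b.constr_basis, φ, LinearMap.liftBaseChange_tmul,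
      one_smul, Submodule.subtype_apply, LinearMap.id_apply]
  have hψφ : ψ ∘ₗ φ = LinearMap.id := TensorProduct.AlgebraTensorModule.curry_injective <|
    LinearMap.ext₂ fun l x => by simp [φ, hψ, TensorProduct.smul_tmul']
  exact Function.bijective_iff_has_inverse.mpr
    ⟨ψ, LinearMap.congr_fun hψφ, LinearMap.congr_fun hφψ⟩

end Semilinear

/-- Let `L` be an algebra over a commutative ring `R`, `F` a ring endomorphism of `L` whose
fixed subring is exactly `R`, and `M` a finite free `L`-module with an `F`-semilinear
endomorphism `t` whose matrix `A` on some `L`-basis `e` satisfies the Lang equation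
`A = F(X)⁻¹·X` for some `X ∈ GLₙ(L)`. Then the natural map `L ⊗_R M^{t=1} → M`,
`λ ⊗ m ↦ λ·m`, is bijective; in particular `M` has an `L`-basis of `t`-fixed vectors. -/
theorem semilinear_fixed_points_basis {R L M : Type*} [CommRing R] [CommRing L] [Algebra R L]
    [AddCommGroup M] [Module L M] [Module R M] [IsScalarTower R L M]
    (F : L →+* L) (hfix : ∀ x : L, F x = x ↔ ∃ r : R, algebraMap R L r = x)
    (t : M →ₗ[R] M) (hsemi : ∀ (c : L) (m : M), t (c • m) = F c • t m)
    {n : ℕ} (e : Module.Basis (Fin n) L M) (A : Matrix (Fin n) (Fin n) L)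
    (hA : ∀ i, t (e i) = ∑ j, A i j • e j)
    (X : (Matrix (Fin n) (Fin n) L)ˣ)
    (hX : (X : Matrix (Fin n) (Fin n) L).map F * A = (X : Matrix (Fin n) (Fin n) L)) :
    Function.Bijective
      ((LinearMap.eqLocus t LinearMap.id).subtype.liftBaseChange L :
        L ⊗[R] (LinearMap.eqLocus t LinearMap.id) →ₗ[L] M) ∧
      ∃ b : Module.Basis (Fin n) L M, ∀ i, t (b i) = b i := by
  obtain ⟨b, hb⟩ := e.exists_basis_apply_eq_sum_smul X
  have hfixed : ∀ i, t (b i) = b i := fun i => by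
    rw [hb, semilinear_apply_sum_smul hsemi hA, hX]
  exact ⟨liftBaseChange_eqLocus_bijective_of_basis (fun x => (hfix x).mp) hsemi b hfixed,
    b, hfixed⟩
end
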